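/- Let u, v be continuous functions on a bounded open connected set Ω ⊆ ℝᵈ, both semi-convex (hence differentiable a.e.), and suppose that at every point x₀ where both are differentiable and u(x₀) = v(x₀) one has Du(x₀) = Dv(x₀). Suppose further that the problem is translation-invariant: for every α ∈ ℝ, v + α satisfies the same hypotheses with u. If there exists a point where both u and v are differentiable, then u − v is constant on Ω. -/

import Mathlib

open MeasureTheory

section AuxLemmas

open Set
open scoped NNReal ENNReal

/-- 1D: a Lipschitz function with a.e. zero derivative on `(0,1)` satisfies `g 0 ≤ g 1`. -/
lemma lip_ae_deriv_zero_le {K : ℝ≥0} {g : ℝ → ℝ} (hg : LipschitzWith K g)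
    (h : ∀ᵐ t, t ∈ Set.Ioo (0:ℝ) 1 → HasDerivAt g 0 t) : g 0 ≤ g 1 := by
  set h' : ℝ → ℝ := fun t => g t + (K:ℝ) * t with hh'
  have hmono : Monotone h' := by
    intro a b hab
    have h1 : |g a - g b| ≤ (K:ℝ) * |a - b| := by
      simpa [Real.dist_eq] using hg.dist_le_mul a b
    have h2 : |a - b| = b - a := by rw [abs_sub_comm]; exact abs_of_nonneg (by linarith)
    rw [h2] at h1
    have h4 : g a - g b ≤ (K:ℝ) * (b - a) := le_trans (le_abs_self _) h1
    simp only [hh']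
    linarith
  set F : StieltjesFunction ℝ :=
    { toFun := h'
      mono' := hmono
      right_continuous' := fun x =>
        ((hg.continuous.add (continuous_const.mul continuous_id)).continuousAt).continuousWithinAt }
  haveI : SigmaFinite F.measure := by infer_instance
  have key := F.ae_hasDerivAt
  have hlt := Measure.rnDeriv_lt_top F.measure volume
  have hIoo : ∀ᵐ t : ℝ, t ∈ Set.Ioo (0:ℝ) 1 →
      F.measure.rnDeriv volume t = (K : ℝ≥0∞) := by
    filter_upwards [key, hlt, h] with t hF ht hgd
    intro htIoo
    have hK : HasDerivAt h' (0 + (K:ℝ) * 1) t :=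
      (hgd htIoo).add ((hasDerivAt_id t).const_mul (K:ℝ))
    have hK' : HasDerivAt h' (K:ℝ) t := by simpa using hK
    have hFt : HasDerivAt h' ((F.measure.rnDeriv volume t).toReal) t := hF
    have := hFt.unique hK'
    have h4 : F.measure.rnDeriv volume t = ENNReal.ofReal (K:ℝ) := by
      rw [← this, ENNReal.ofReal_toReal ht.ne]
    rw [h4, ENNReal.ofReal_coe_nnreal]
  have hineq : (K : ℝ≥0∞) ≤ F.measure (Set.Ioc 0 1) := by
    have hle := Measure.le_iff'.1 (Measure.withDensity_rnDeriv_le F.measure volume) (Set.Ioc 0 1)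
    rw [withDensity_apply _ measurableSet_Ioc] at hle
    have hIocIoo : ∀ᵐ t : ℝ, t ∈ Set.Ioc (0:ℝ) 1 → t ∈ Set.Ioo (0:ℝ) 1 := by
      rw [ae_iff]
      refine measure_mono_null (fun t ht => ?_) (measure_singleton (1:ℝ))
      simp only [Set.mem_setOf_eq, not_forall] at ht
      obtain ⟨h1, h2⟩ := ht
      simp only [Set.mem_Ioc, Set.mem_Ioo] at h1 h2
      have : t = 1 := le_antisymm h1.2 (not_lt.1 fun hlt1 => h2 ⟨h1.1, hlt1⟩)
      simpa using this
    have hcong : ∫⁻ t in Set.Ioc (0:ℝ) 1, F.measure.rnDeriv volume t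
        = ∫⁻ _ in Set.Ioc (0:ℝ) 1, (K : ℝ≥0∞) := by
      apply lintegral_congr_ae
      refine (ae_restrict_iff' measurableSet_Ioc).2 ?_
      filter_upwards [hIoo, hIocIoo] with t h1 h2 h3
      exact h1 (h2 h3)
    rw [hcong, setLIntegral_const, Real.volume_Ioc] at hle
    simpa using hle
  rw [F.measure_Ioc] at hineq
  have hr0 : (0:ℝ) ≤ F 1 - F 0 := sub_nonneg.2 (hmono zero_le_one)
  have := (ENNReal.le_ofReal_iff_toReal_le ENNReal.coe_ne_top hr0).1 hineq
  simp only [ENNReal.coe_toReal] at this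
  have hF10 : F 1 - F 0 = h' 1 - h' 0 := rfl
  rw [hF10] at this
  simp only [hh'] at this
  linarith

lemma lip_ae_deriv_zero_eq {K : ℝ≥0} {g : ℝ → ℝ} (hg : LipschitzWith K g)
    (h : ∀ᵐ t, t ∈ Set.Ioo (0:ℝ) 1 → HasDerivAt g 0 t) : g 0 = g 1 := by
  refine le_antisymm (lip_ae_deriv_zero_le hg h) ?_
  have hneg : LipschitzWith K (fun t => -(g t)) := hg.neg
  have hneg' : ∀ᵐ t, t ∈ Set.Ioo (0:ℝ) 1 → HasDerivAt (fun t => -(g t)) 0 t := by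
    filter_upwards [h] with t ht htm
    have h1 := (ht htm).neg; rw [neg_zero] at h1; exact h1
  have := lip_ae_deriv_zero_le hneg hneg'
  simpa using this

/-- Fubini: if `N` is null, then for a.e. `x`, a.e. point of the line `x + t • v` avoids `N`. -/
lemma ae_ae_line {d : ℕ} {N : Set (EuclideanSpace ℝ (Fin d))}
    (hNm : MeasurableSet N) (hN : volume N = 0) (v : EuclideanSpace ℝ (Fin d)) :
    ∀ᵐ x : EuclideanSpace ℝ (Fin d), ∀ᵐ t : ℝ, x + t • v ∉ N := by
  set S : Set ((EuclideanSpace ℝ (Fin d)) × ℝ) := {p | p.1 + p.2 • v ∈ N} with hS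
  have hSm : MeasurableSet S :=
    (continuous_fst.add (continuous_snd.smul continuous_const)).measurable hNm
  set S' : Set (ℝ × EuclideanSpace ℝ (Fin d)) := {p | p.2 + p.1 • v ∈ N} with hS'
  have hS'm : MeasurableSet S' :=
    (continuous_snd.add (continuous_fst.smul continuous_const)).measurable hNm
  have hS'0 : (volume.prod volume : Measure (ℝ × EuclideanSpace ℝ (Fin d))) S' = 0 := by
    rw [Measure.measure_prod_null hS'm]
    refine Filter.Eventually.of_forall fun t => ?_
    have h1 : (Prod.mk t ⁻¹' S') = (fun x => x + t • v) ⁻¹' N := rfl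
    show volume (Prod.mk t ⁻¹' S') = 0
    rw [h1, measure_preimage_add_right]
    exact hN
  have hS0 : (volume.prod volume) S = 0 := by
    have hswap : S = Prod.swap ⁻¹' S' := rfl
    rw [hswap, ← Measure.map_apply measurable_swap hS'm, Measure.prod_swap]
    exact hS'0
  have hae : ∀ᵐ z : (EuclideanSpace ℝ (Fin d)) × ℝ ∂(volume.prod volume), z.1 + z.2 • v ∉ N := by
    rw [ae_iff]
    simpa [hS] using hS0
  exact Measure.ae_ae_of_ae_prod hae

/-- Difference of Lipschitz-on-set real functions. -/
lemma lipschitzOnWith_sub {α : Type*} [PseudoMetricSpace α] {f g : α → ℝ} {s : Set α}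
    {Kf Kg : ℝ≥0} (hf : LipschitzOnWith Kf f s) (hg : LipschitzOnWith Kg g s) :
    LipschitzOnWith (Kf + Kg) (fun x => f x - g x) s := by
  apply LipschitzOnWith.of_dist_le_mul
  intro x hx y hy
  have h1 := hf.dist_le_mul x hx y hy
  have h2 := hg.dist_le_mul x hx y hy
  have h3 := dist_sub_sub_le (f x) (g x) (f y) (g y)
  push_cast
  linarith

/-- The quadratic `z ↦ C‖z‖²` is Lipschitz on balls. -/
lemma lipschitzOnWith_quadratic {d : ℕ} (C : ℝ) (hC : 0 ≤ C)
    (x : EuclideanSpace ℝ (Fin d)) (r : ℝ) (hr : 0 < r) :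
    LipschitzOnWith (C * (2 * ‖x‖ + 2 * r)).toNNReal
      (fun z => C * ‖z‖ ^ 2) (Metric.ball x r) := by
  apply LipschitzOnWith.of_dist_le_mul
  intro a ha b hb
  have hna : ‖a‖ ≤ ‖x‖ + r := by
    have h1 : dist a x < r := Metric.mem_ball.1 ha
    have h2 : ‖a‖ - ‖x‖ ≤ ‖a - x‖ := norm_sub_norm_le a x
    rw [dist_eq_norm] at h1
    linarith
  have hnb : ‖b‖ ≤ ‖x‖ + r := by
    have h1 : dist b x < r := Metric.mem_ball.1 hb
    have h2 : ‖b‖ - ‖x‖ ≤ ‖b - x‖ := norm_sub_norm_le b x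
    rw [dist_eq_norm] at h1
    linarith
  have habs : |‖a‖ - ‖b‖| ≤ dist a b := by
    rw [dist_eq_norm]; exact abs_norm_sub_norm_le a b
  have hcoe : ((C * (2 * ‖x‖ + 2 * r)).toNNReal : ℝ) = C * (2 * ‖x‖ + 2 * r) :=
    Real.coe_toNNReal _ (by positivity)
  rw [Real.dist_eq, hcoe]
  have hfact : C * ‖a‖ ^ 2 - C * ‖b‖ ^ 2 = C * ((‖a‖ - ‖b‖) * (‖a‖ + ‖b‖)) := by ring
  rw [hfact, abs_mul, abs_mul, abs_of_nonneg hC,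
    abs_of_nonneg (by positivity : (0:ℝ) ≤ ‖a‖ + ‖b‖)]
  have h0 : (0:ℝ) ≤ dist a b := dist_nonneg
  have h5 : |‖a‖ - ‖b‖| * (‖a‖ + ‖b‖) ≤ dist a b * (2 * ‖x‖ + 2 * r) :=
    mul_le_mul habs (by linarith) (by positivity) h0
  nlinarith

end AuxLemmas

open scoped NNReal ENNReal

/-- abstract uniqueness-up-to-a-constant. If `u, v` are continuous,
semi-convex on the bounded open connected set `Ω`, gradients agree wherever both are
differentiable with equal values, the property is translation invariant (it holds for
`u` and `v + α` for every `α`), and there is a common differentiability point, then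
`u - v` is constant on `Ω`. -/
theorem uniqueness_up_to_constant_abstract
    (d : ℕ) (Ω : Set (EuclideanSpace ℝ (Fin d)))
    (hΩopen : IsOpen Ω) (hΩconn : IsConnected Ω) (hΩbdd : Bornology.IsBounded Ω)
    (u v : EuclideanSpace ℝ (Fin d) → ℝ)
    (hu : ContinuousOn u Ω) (hv : ContinuousOn v Ω)
    (huscv : ∃ C : ℝ, 0 ≤ C ∧ ConvexOn ℝ Ω (fun x => u x + C * ‖x‖ ^ 2))
    (hvscv : ∃ C : ℝ, 0 ≤ C ∧ ConvexOn ℝ Ω (fun x => v x + C * ‖x‖ ^ 2))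
    -- gradient agreement at equal-value differentiability points, translation invariant:
    (hgrad : ∀ (α : ℝ), ∀ x₀ ∈ Ω, DifferentiableAt ℝ u x₀ → DifferentiableAt ℝ v x₀ →
      u x₀ = v x₀ + α → fderiv ℝ u x₀ = fderiv ℝ v x₀)
    (hpt : ∃ x₀ ∈ Ω, DifferentiableAt ℝ u x₀ ∧ DifferentiableAt ℝ v x₀) :
    ∃ c : ℝ, ∀ x ∈ Ω, u x - v x = c := by
  classical
  obtain ⟨Cu, hCu0, hFu⟩ := huscv
  obtain ⟨Cv, hCv0, hFv⟩ := hvscv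
  set f : EuclideanSpace ℝ (Fin d) → ℝ := fun z => u z - v z with hf
  -- Step 1: local Lipschitz structure
  have hball : ∀ x ∈ Ω, ∃ r > 0, Metric.ball x r ⊆ Ω ∧
      ∃ Ku Kv : ℝ≥0, LipschitzOnWith Ku u (Metric.ball x r) ∧
        LipschitzOnWith Kv v (Metric.ball x r) := by
    intro x hx
    have hLu := hFu.locallyLipschitzOn hΩopen hx
    have hLv := hFv.locallyLipschitzOn hΩopen hx
    obtain ⟨K₁, t₁, ht₁, hK₁⟩ := hLu
    obtain ⟨K₂, t₂, ht₂, hK₂⟩ := hLv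
    rw [hΩopen.nhdsWithin_eq hx] at ht₁ ht₂
    obtain ⟨r₁, hr₁, hball₁⟩ := Metric.mem_nhds_iff.1 ht₁
    obtain ⟨r₂, hr₂, hball₂⟩ := Metric.mem_nhds_iff.1 ht₂
    obtain ⟨r₃, hr₃, hball₃⟩ := Metric.mem_nhds_iff.1 (hΩopen.mem_nhds hx)
    set r := min r₁ (min r₂ r₃) with hrdef
    have hr : 0 < r := lt_min hr₁ (lt_min hr₂ hr₃)
    have hsub₁ : Metric.ball x r ⊆ t₁ := (Metric.ball_subset_ball (min_le_left _ _)).trans hball₁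
    have hsub₂ : Metric.ball x r ⊆ t₂ :=
      (Metric.ball_subset_ball ((min_le_right _ _).trans (min_le_left _ _))).trans hball₂
    have hsub₃ : Metric.ball x r ⊆ Ω :=
      (Metric.ball_subset_ball ((min_le_right _ _).trans (min_le_right _ _))).trans hball₃
    have hqu := lipschitzOnWith_quadratic Cu hCu0 x r hr
    have hqv := lipschitzOnWith_quadratic Cv hCv0 x r hr
    have hKu : LipschitzOnWith (K₁ + (Cu * (2 * ‖x‖ + 2 * r)).toNNReal) u (Metric.ball x r) := by
      have := lipschitzOnWith_sub (hK₁.mono hsub₁) hqu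
      have heq : (fun z => (u z + Cu * ‖z‖ ^ 2) - Cu * ‖z‖ ^ 2) = u := by
        funext z; ring
      rwa [heq] at this
    have hKv : LipschitzOnWith (K₂ + (Cv * (2 * ‖x‖ + 2 * r)).toNNReal) v (Metric.ball x r) := by
      have := lipschitzOnWith_sub (hK₂.mono hsub₂) hqv
      have heq : (fun z => (v z + Cv * ‖z‖ ^ 2) - Cv * ‖z‖ ^ 2) = v := by
        funext z; ring
      rwa [heq] at this
    exact ⟨r, hr, hsub₃, _, _, hKu, hKv⟩
  -- Step 2: local constancy of f
  have hlocconst : ∀ x ∈ Ω, ∃ ε > 0, Metric.ball x ε ⊆ Ω ∧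
      ∀ y ∈ Metric.ball x ε, f y = f x := by
    intro x hx
    obtain ⟨r, hr, hrΩ, Ku, Kv, hKu, hKv⟩ := hball x hx
    have hKf : LipschitzOnWith (Ku + Kv) f (Metric.ball x r) := lipschitzOnWith_sub hKu hKv
    -- a.e. differentiability and zero derivative on the ball
    have haeu : ∀ᵐ z : EuclideanSpace ℝ (Fin d),
        z ∈ Metric.ball x r → DifferentiableAt ℝ u z := by
      filter_upwards [hKu.ae_differentiableWithinAt_of_mem (μ := volume)] with z hz hzb
      exact (hz hzb).differentiableAt (Metric.isOpen_ball.mem_nhds hzb)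
    have haev : ∀ᵐ z : EuclideanSpace ℝ (Fin d),
        z ∈ Metric.ball x r → DifferentiableAt ℝ v z := by
      filter_upwards [hKv.ae_differentiableWithinAt_of_mem (μ := volume)] with z hz hzb
      exact (hz hzb).differentiableAt (Metric.isOpen_ball.mem_nhds hzb)
    have haed : ∀ᵐ z : EuclideanSpace ℝ (Fin d),
        z ∈ Metric.ball x r → HasFDerivAt f (0 : EuclideanSpace ℝ (Fin d) →L[ℝ] ℝ) z := by
      filter_upwards [haeu, haev] with z hud hvd hzb
      have hud' := hud hzb
      have hvd' := hvd hzb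
      have hfd := hgrad (u z - v z) z (hrΩ hzb) hud' hvd' (by ring)
      have h0 : fderiv ℝ u z - fderiv ℝ v z = 0 := by rw [hfd]; simp
      have := (hud'.hasFDerivAt.sub hvd'.hasFDerivAt)
      rw [h0] at this
      exact this
    set N : Set (EuclideanSpace ℝ (Fin d)) :=
      toMeasurable volume {z | ¬ (z ∈ Metric.ball x r → HasFDerivAt f (0 : EuclideanSpace ℝ (Fin d) →L[ℝ] ℝ) z)} with hNdef
    have hNm : MeasurableSet N := measurableSet_toMeasurable _ _
    have hN0 : volume N = 0 := by
      rw [hNdef, measure_toMeasurable]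
      exact haed
    have hNgood : ∀ z, z ∉ N → z ∈ Metric.ball x r → HasFDerivAt f (0 : EuclideanSpace ℝ (Fin d) →L[ℝ] ℝ) z := by
      intro z hz
      by_contra hcon
      exact hz (subset_toMeasurable _ _ hcon)
    refine ⟨r/4, by positivity, fun z hz =>
      hrΩ (Metric.ball_subset_ball (by linarith) hz), fun y hy => ?_⟩
    set v0 : EuclideanSpace ℝ (Fin d) := y - x with hv0def
    have hv0 : ‖v0‖ < r/4 := by
      have := Metric.mem_ball.1 hy
      rwa [dist_eq_norm] at this
    -- the key claim: f (w + v0) = f w for a.e. w near x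
    have hseg : ∀ w ∈ Metric.ball x (r/4), ∀ s ∈ Set.Icc (0:ℝ) 1,
        w + s • v0 ∈ Metric.ball x r := by
      intro w hw s hs
      have hwx : ‖w - x‖ < r/4 := by
        have := Metric.mem_ball.1 hw; rwa [dist_eq_norm] at this
      have h1 : ‖s • v0‖ ≤ ‖v0‖ := by
        rw [norm_smul, Real.norm_eq_abs, abs_of_nonneg hs.1]
        nlinarith [norm_nonneg v0, hs.2]
      have h2 : w + s • v0 - x = (w - x) + s • v0 := by abel
      rw [Metric.mem_ball, dist_eq_norm, h2]
      calc ‖(w - x) + s • v0‖ ≤ ‖w - x‖ + ‖s • v0‖ := norm_add_le _ _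
        _ < r/4 + r/4 := by linarith [h1.trans_lt hv0]
        _ ≤ r := by linarith
    have hφ0 : ∀ w ∈ Metric.ball x (r/4), (∀ᵐ t : ℝ, w + t • v0 ∉ N) →
        f (w + v0) = f w := by
      intro w hw hae
      set c : ℝ → EuclideanSpace ℝ (Fin d) :=
        fun t => w + ((Set.projIcc (0:ℝ) 1 zero_le_one t : Set.Icc (0:ℝ) 1) : ℝ) • v0 with hcdef
      set g : ℝ → ℝ := fun t => f (c t) with hgdef
      -- Lipschitz
      have hproj : LipschitzWith 1
          (fun t : ℝ => ((Set.projIcc (0:ℝ) 1 zero_le_one t : Set.Icc (0:ℝ) 1) : ℝ)) := by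
        have h1 : LipschitzWith 1 (Set.projIcc (0:ℝ) 1 zero_le_one) := LipschitzWith.projIcc _
        have h2 := (LipschitzWith.subtype_val (Set.Icc (0:ℝ) 1)).comp h1
        rw [one_mul] at h2; exact h2
      have haff : LipschitzWith ‖v0‖₊ (fun s : ℝ => w + s • v0) := by
        apply LipschitzWith.of_dist_le_mul
        intro s t
        have : (w + s • v0) - (w + t • v0) = (s - t) • v0 := by
          rw [smul_sub] at *
          module
        rw [dist_eq_norm, this, norm_smul, Real.dist_eq]
        simp [Real.norm_eq_abs, mul_comm]
      have hc : LipschitzWith (‖v0‖₊ * 1) c := haff.comp hproj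
      have hmaps : Set.MapsTo c Set.univ (Metric.ball x r) := by
        intro t _
        exact hseg w hw _ (Set.projIcc (0:ℝ) 1 zero_le_one t).2
      have hgl : LipschitzWith ((Ku + Kv) * (‖v0‖₊ * 1)) g := by
        rw [← lipschitzOnWith_univ]
        exact hKf.comp (hc.lipschitzOnWith) hmaps
      -- derivative
      have hgd : ∀ᵐ t : ℝ, t ∈ Set.Ioo (0:ℝ) 1 → HasDerivAt g 0 t := by
        filter_upwards [hae] with t ht htm
        have htIcc : t ∈ Set.Icc (0:ℝ) 1 := Set.mem_Icc_of_Ioo htm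
        have hzball : w + t • v0 ∈ Metric.ball x r := hseg w hw t htIcc
        have hF : HasFDerivAt f (0 : EuclideanSpace ℝ (Fin d) →L[ℝ] ℝ) (w + t • v0) := hNgood _ ht hzball
        have hcurve : HasDerivAt (fun s : ℝ => w + s • v0) v0 t := by
          simpa using ((hasDerivAt_id t).smul_const v0).const_add w
        have hcomp : HasDerivAt (fun s : ℝ => f (w + s • v0))
            ((0 : EuclideanSpace ℝ (Fin d) →L[ℝ] ℝ) v0) t := HasFDerivAt.comp_hasDerivAt (l := f) (f := fun s : ℝ => w + s • v0) t hF hcurve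
        have hcomp' : HasDerivAt (fun s : ℝ => f (w + s • v0)) 0 t := by simpa using hcomp
        apply hcomp'.congr_of_eventuallyEq
        filter_upwards [isOpen_Ioo.mem_nhds htm] with s hs
        simp only [hgdef, hcdef, Set.projIcc_of_mem zero_le_one (Set.mem_Icc_of_Ioo hs)]
      have := lip_ae_deriv_zero_eq hgl hgd
      have hg0 : g 0 = f w := by
        simp [hgdef, hcdef, Set.projIcc_left]
      have hg1 : g 1 = f (w + v0) := by
        simp [hgdef, hcdef, Set.projIcc_right]
      rw [hg0, hg1] at this
      exact this.symm
    -- φ is zero a.e. hence at x by continuity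
    have hA := ae_ae_line hNm hN0 v0
    have hfy : f (x + v0) = f x := by
      by_contra hcon
      have hcontf : ContinuousAt f x := by
        have hcu := hu.continuousAt (hΩopen.mem_nhds hx)
        have hcv := hv.continuousAt (hΩopen.mem_nhds hx)
        exact hcu.sub hcv
      have hyΩ : x + v0 ∈ Ω := by
        have : x + v0 = y := by rw [hv0def]; abel
        rw [this]
        exact hrΩ (Metric.ball_subset_ball (by linarith) hy)
      have hcontf2 : ContinuousAt (fun w => f (w + v0)) x := by
        have hcu := hu.continuousAt (hΩopen.mem_nhds hyΩ)
        have hcv := hv.continuousAt (hΩopen.mem_nhds hyΩ)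
        have h3 : Continuous (fun w : EuclideanSpace ℝ (Fin d) => w + v0) :=
          continuous_id.add continuous_const
        have h4 : ContinuousAt f (x + v0) := hcu.sub hcv
        have h5 : ContinuousAt (f ∘ fun w => w + v0) x := ContinuousAt.comp (f := fun w => w + v0) (x := x) h4 h3.continuousAt
        exact h5
      have hφcont : ContinuousAt (fun w => f (w + v0) - f w) x := hcontf2.sub hcontf
      have hne : ∀ᶠ w in nhds x, f (w + v0) - f w ≠ 0 := by
        apply hφcont.eventually_ne
        intro h0
        exact hcon (by linarith [sub_eq_zero.1 h0])
      obtain ⟨δ₀, hδ₀, hδball⟩ := Metric.eventually_nhds_iff.1 hne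
      set δ := min δ₀ (r/4) with hδdef
      have hδpos : 0 < δ := lt_min hδ₀ (by positivity)
      have hsubbad : Metric.ball x δ ⊆ {w | ¬ ∀ᵐ t : ℝ, w + t • v0 ∉ N} := by
        intro w hw
        intro hP
        have hw4 : w ∈ Metric.ball x (r/4) :=
          Metric.ball_subset_ball (min_le_right _ _) hw
        have := hφ0 w hw4 hP
        have hwδ : dist w x < δ₀ := lt_of_lt_of_le (Metric.mem_ball.1 hw) (min_le_left _ _)
        exact hδball hwδ (by linarith [this])
      have hbad0 : volume {w : EuclideanSpace ℝ (Fin d) |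
          ¬ ∀ᵐ t : ℝ, w + t • v0 ∉ N} = 0 := by
        rw [← ae_iff] at *
        exact hA
      have := measure_mono_null hsubbad hbad0
      exact absurd this (Metric.measure_ball_pos volume x hδpos).ne'
    have : x + v0 = y := by rw [hv0def]; abel
    rwa [this] at hfy
  -- Step 3: patching via connectedness
  obtain ⟨x₀, hx₀⟩ := hΩconn.nonempty
  refine ⟨f x₀, ?_⟩
  choose! ε hεpos hεΩ hεconst using hlocconst
  set U : Set (EuclideanSpace ℝ (Fin d)) :=
    ⋃ (w : EuclideanSpace ℝ (Fin d)) (_ : w ∈ Ω ∧ f w = f x₀), Metric.ball w (ε w) with hUdef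
  set V : Set (EuclideanSpace ℝ (Fin d)) :=
    ⋃ (w : EuclideanSpace ℝ (Fin d)) (_ : w ∈ Ω ∧ f w ≠ f x₀), Metric.ball w (ε w) with hVdef
  have hUopen : IsOpen U := isOpen_iUnion fun w => isOpen_iUnion fun _ => Metric.isOpen_ball
  have hVopen : IsOpen V := isOpen_iUnion fun w => isOpen_iUnion fun _ => Metric.isOpen_ball
  have hUval : ∀ z ∈ U, f z = f x₀ := by
    intro z hz
    simp only [hUdef, Set.mem_iUnion] at hz
    obtain ⟨w, ⟨hwΩ, hwv⟩, hzb⟩ := hz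
    rw [hεconst w hwΩ z hzb, hwv]
  have hVval : ∀ z ∈ V, f z ≠ f x₀ := by
    intro z hz
    simp only [hVdef, Set.mem_iUnion] at hz
    obtain ⟨w, ⟨hwΩ, hwv⟩, hzb⟩ := hz
    rw [hεconst w hwΩ z hzb]
    exact hwv
  have hcover : Ω ⊆ U ∪ V := by
    intro w hw
    have hself : w ∈ Metric.ball w (ε w) := Metric.mem_ball_self (hεpos w hw)
    by_cases hc : f w = f x₀
    · left; simp only [hUdef, Set.mem_iUnion]; exact ⟨w, ⟨hw, hc⟩, hself⟩
    · right; simp only [hVdef, Set.mem_iUnion]; exact ⟨w, ⟨hw, hc⟩, hself⟩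
  have hdisj : Ω ∩ (U ∩ V) = ∅ := by
    apply Set.eq_empty_iff_forall_notMem.2
    rintro z ⟨_, hzU, hzV⟩
    exact absurd (hUval z hzU) (hVval z hzV)
  have hUne : (Ω ∩ U).Nonempty := by
    refine ⟨x₀, hx₀, ?_⟩
    simp only [hUdef, Set.mem_iUnion]
    exact ⟨x₀, ⟨hx₀, rfl⟩, Metric.mem_ball_self (hεpos x₀ hx₀)⟩
  have hVempty : ¬ (Ω ∩ V).Nonempty := by
    intro hVne
    have := hΩconn.isPreconnected U V hUopen hVopen hcover hUne hVne
    rw [hdisj] at this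
    exact Set.not_nonempty_empty this
  intro z hz
  have hzU : z ∈ U := by
    rcases hcover hz with h | h
    · exact h
    · exact absurd ⟨z, hz, h⟩ hVempty
  exact hUval z hzU
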